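/- arXiv:1001.1017 — 5 statements merged into one kernel-verified Lean document; each statement's English description precedes it below -/
import Mathlib

section
/- For natural numbers a, b, if a > φ·b and b > 0, then a − b < a, b ≤ a, and b < φ·(a − b) (so the total number of cards strictly decreases and the lemma hypothesis is preserved), where φ = (1+√5)/2. -/
open Real
open scoped goldenRatio

lemma lt_of_goldenRatio_mul_lt {x y : ℝ} (hy : 0 ≤ y) (h : φ * y < x) : y < x :=
  (le_mul_of_one_le_left hy one_lt_goldenRatio.le).trans_lt h

lemma lt_goldenRatio_mul_sub {x y : ℝ} (h : φ * y < x) : y < φ * (x - y) :=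
  calc y = φ * (φ * y) - φ * y := by rw [← mul_assoc, ← sq, goldenRatio_sq]; ring
    _ < φ * x - φ * y := by gcongr
    _ = φ * (x - y) := by ring

theorem nat_induction_step (a b : ℕ) (h : (a : ℝ) > (1 + Real.sqrt 5) / 2 * b) (hb : 0 < b) :
    a - b < a ∧ b ≤ a ∧ (b : ℝ) < (1 + Real.sqrt 5) / 2 * ((a - b : ℕ) : ℝ) := by
  have hφ : φ * b < a := h
  have hba : b ≤ a := by exact_mod_cast (lt_of_goldenRatio_mul_lt b.cast_nonneg hφ).le
  refine ⟨Nat.sub_lt (hb.trans_le hba) hb, hba, ?_⟩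
  rw [Nat.cast_sub hba]
  exact lt_goldenRatio_mul_sub hφ
end

section
/- In the formal model of Peer Pressure, if Alice's hand A and Bob's hand B satisfy |A| > φ·|B| (φ the golden ratio), then Alice has a winning strategy. -/
/-- `AliceWins A B` : in the game Peer Pressure with Alice holding the hand `A`
and Bob holding the hand `B` (disjoint finite sets of integers), Alice has a
(pure) winning strategy.  In each round both players simultaneously play a card;
the higher card is discarded and the lower card is passed to the player of the
higher card; a player with no cards left loses. -/
inductive AliceWins : Finset ℤ → Finset ℤ → Prop
  | base {A : Finset ℤ} (hA : A.Nonempty) : AliceWins A ∅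
  | step {A B : Finset ℤ} (hB : B.Nonempty) (a : ℤ) (ha : a ∈ A)
      (h : ∀ b ∈ B,
        AliceWins (if b < a then insert b (A.erase a) else A.erase a)
                  (if b < a then B.erase b else insert a (B.erase b))) :
      AliceWins A B

/-!
Alice keeps a threshold `t`, always plays her least card `a ≥ t`, and then moves the threshold
to `a + 1`. Writing `s` and `l` for the numbers of Alice's and Bob's cards `≥ t`, she maintains
`φ (|B| - s) + φ² min(s, l) < |A|`. If Bob answers with a lower card he loses it for good; if he
answers with a higher card he loses a card `≥ t` and gains only one below the new threshold, and
`φ² - φ = 1` pays for Alice's lost card. Once Alice has no card `≥ t` the bound reads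
`φ |B| < |A|`, and a threshold below all cards restores it because `φ + φ² = φ³`.
-/

open Finset Real goldenRatio

namespace PeerPressure

noncomputable def pressure (n s l : ℕ) : ℝ := φ * ((n : ℝ) - s) + φ ^ 2 * (min s l : ℕ)

lemma pressure_zero (n l : ℕ) : pressure n 0 l = φ * n := by
  simp [pressure]

lemma pressure_mono {n s l l' : ℕ} (h : l ≤ l') : pressure n s l ≤ pressure n s l' := by
  unfold pressure
  gcongr

lemma pressure_le_succ_succ (n s l : ℕ) : pressure n s l ≤ pressure (n + 1) (s + 1) l := by
  have hdiff : ((n + 1 : ℕ) : ℝ) - (s + 1 : ℕ) = n - s := by push_cast; ring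
  unfold pressure
  rw [hdiff]
  gcongr
  omega

lemma pressure_succ_succ (n s l : ℕ) : pressure n (s + 1) (l + 1) = pressure n s l + 1 := by
  simp only [pressure, Nat.add_min_add_right]
  push_cast
  linear_combination goldenRatio_sq

lemma pressure_self_lt {m n : ℕ} (h : φ * n < m) : pressure n m n < m := by
  have hmin : ((min m n : ℕ) : ℝ) ≤ n := by exact_mod_cast min_le_right m n
  calc pressure n m n ≤ φ * ((n : ℝ) - m) + φ ^ 2 * n := by
        unfold pressure; gcongr
    _ = φ ^ 2 * (φ * n) - φ * m := by linear_combination -(n : ℝ) * φ * goldenRatio_sq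
    _ < φ ^ 2 * m - φ * m := by gcongr
    _ = m := by linear_combination (m : ℝ) * goldenRatio_sq

def Invariant (A B : Finset ℤ) (t : ℤ) : Prop :=
  pressure #B #{x ∈ A | t ≤ x} #{x ∈ B | t ≤ x} < #A

lemma exists_invariant_of_card_lt {A B : Finset ℤ} (h : φ * #B < #A) :
    ∃ t, {x ∈ A | t ≤ x}.Nonempty ∧ Invariant A B t := by
  obtain ⟨t, ht⟩ := (A ∪ B).bddBelow
  have hle : ∀ x ∈ A ∪ B, t ≤ x := fun x hx => ht hx
  have hA : {x ∈ A | t ≤ x} = A := filter_true_of_mem fun x hx => hle x (mem_union_left B hx)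
  have hB : {x ∈ B | t ≤ x} = B := filter_true_of_mem fun x hx => hle x (mem_union_right A hx)
  refine ⟨t, ?_, ?_⟩
  · rw [hA, ← card_pos, ← Nat.cast_pos (α := ℝ)]
    exact (mul_nonneg goldenRatio_pos.le (Nat.cast_nonneg _)).trans_lt h
  · rw [Invariant, hA, hB]
    exact pressure_self_lt h

lemma exists_playable_invariant {A B : Finset ℤ} {t : ℤ} (h : Invariant A B t) :
    ∃ t', {x ∈ A | t' ≤ x}.Nonempty ∧ Invariant A B t' := by
  rcases {x ∈ A | t ≤ x}.eq_empty_or_nonempty with hs | hs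
  · apply exists_invariant_of_card_lt
    rwa [Invariant, hs, card_empty, pressure_zero] at h
  · exact ⟨t, hs, h⟩

section Round

variable {A B : Finset ℤ} {t a b : ℤ}

lemma card_filter_le_eq_card_filter_lt_add_one (ha : a ∈ A) (hta : t ≤ a)
    (hmin : ∀ x ∈ A, t ≤ x → a ≤ x) : #{x ∈ A | t ≤ x} = #{x ∈ A | a < x} + 1 := by
  have : {x ∈ A | t ≤ x} = insert a {x ∈ A | a < x} := by
    ext x
    simp only [mem_filter, mem_insert]
    constructor
    · rintro ⟨hx, htx⟩
      rcases (hmin x hx htx).eq_or_lt with rfl | hax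
      exacts [Or.inl rfl, Or.inr ⟨hx, hax⟩]
    · rintro (rfl | ⟨hx, hax⟩)
      exacts [⟨ha, hta⟩, ⟨hx, hta.trans hax.le⟩]
  rw [this, card_insert_of_notMem (by simp)]

lemma Invariant.duck (h : Invariant A B t) (ha : a ∈ A) (hta : t ≤ a)
    (hmin : ∀ x ∈ A, t ≤ x → a ≤ x) (hb : b ∈ B) (hba : b < a) (hbA : b ∉ A) :
    Invariant (insert b (A.erase a)) (B.erase b) (a + 1) := by
  have hs : #{x ∈ insert b (A.erase a) | a + 1 ≤ x} = #{x ∈ A | a < x} := by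
    congr 1; ext x; simp only [mem_filter, mem_insert, mem_erase]; grind
  have hl : #{x ∈ B.erase b | a + 1 ≤ x} ≤ #{x ∈ B | t ≤ x} :=
    card_le_card fun x => by simp only [mem_filter, mem_erase]; grind
  have hA : #(insert b (A.erase a)) = #A := by
    rw [card_insert_of_notMem (fun hb' => hbA (mem_of_mem_erase hb')), card_erase_add_one ha]
  have hB : #(B.erase b) + 1 = #B := card_erase_add_one hb
  unfold Invariant at h ⊢
  rw [hs, hA]
  rw [← hB, card_filter_le_eq_card_filter_lt_add_one ha hta hmin] at h
  exact ((pressure_mono hl).trans (pressure_le_succ_succ _ _ _)).trans_lt h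

lemma Invariant.beat (h : Invariant A B t) (ha : a ∈ A) (hta : t ≤ a)
    (hmin : ∀ x ∈ A, t ≤ x → a ≤ x) (hb : b ∈ B) (hab : a < b) (haB : a ∉ B) :
    Invariant (A.erase a) (insert a (B.erase b)) (a + 1) := by
  have hs : #{x ∈ A.erase a | a + 1 ≤ x} = #{x ∈ A | a < x} := by
    congr 1; ext x; simp only [mem_filter, mem_erase]; grind
  have hl : #{x ∈ insert a (B.erase b) | a + 1 ≤ x} + 1 ≤ #{x ∈ B | t ≤ x} := by
    have hsub : {x ∈ insert a (B.erase b) | a + 1 ≤ x} ⊆ {x ∈ B | t ≤ x}.erase b := by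
      intro x; simp only [mem_filter, mem_insert, mem_erase]; grind
    have hbmem : b ∈ {x ∈ B | t ≤ x} := mem_filter.2 ⟨hb, by omega⟩
    exact (Nat.add_le_add_right (card_le_card hsub) 1).trans_eq (card_erase_add_one hbmem)
  have hA : #(A.erase a) + 1 = #A := card_erase_add_one ha
  have hB : #(insert a (B.erase b)) = #B := by
    rw [card_insert_of_notMem (fun ha' => haB (mem_of_mem_erase ha')), card_erase_add_one hb]
  unfold Invariant at h ⊢
  rw [hs, hB]
  rw [← hA, card_filter_le_eq_card_filter_lt_add_one ha hta hmin] at h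
  have hmono := pressure_mono (n := #B) (s := #{x ∈ A | a < x} + 1) hl
  rw [pressure_succ_succ] at hmono
  push_cast at h
  linarith

end Round

theorem aliceWins_of_invariant {A B : Finset ℤ} {t : ℤ} (hd : Disjoint A B)
    (h : Invariant A B t) : AliceWins A B := by
  induction hN : #A + #B using Nat.strong_induction_on generalizing A B t with
  | _ N ih =>
    obtain ⟨t, hU, h⟩ := exists_playable_invariant h
    rcases B.eq_empty_or_nonempty with rfl | hB
    · exact .base (hU.mono (filter_subset _ A))
    obtain ⟨ha, hta⟩ := mem_filter.1 ({x ∈ A | t ≤ x}.min'_mem hU)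
    set a := {x ∈ A | t ≤ x}.min' hU
    have hmin : ∀ x ∈ A, t ≤ x → a ≤ x := fun x hx htx => min'_le _ x (mem_filter.2 ⟨hx, htx⟩)
    refine .step hB a ha fun b hb => ?_
    have hbA : b ∉ A := disjoint_right.1 hd hb
    have haB : a ∉ B := disjoint_left.1 hd ha
    have herase : Disjoint (A.erase a) (B.erase b) := hd.mono (erase_subset a A) (erase_subset b B)
    have hA := card_erase_add_one ha
    have hB := card_erase_add_one hb
    rcases lt_or_gt_of_ne (ne_of_mem_of_not_mem ha hbA).symm with hba | hab
    · simp only [if_pos hba]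
      refine ih _ ?_ (disjoint_insert_left.2 ⟨notMem_erase b B, herase⟩)
        (h.duck ha hta hmin hb hba hbA) rfl
      have := card_insert_le b (A.erase a)
      omega
    · simp only [if_neg (not_lt.2 hab.le)]
      refine ih _ ?_ (disjoint_insert_right.2 ⟨notMem_erase a A, herase⟩)
        (h.beat ha hta hmin hb hab haB) rfl
      have := card_insert_le a (B.erase b)
      omega

end PeerPressure

theorem main_lemma_many_cards (A B : Finset ℤ) (hdisj : Disjoint A B)
    (h : (A.card : ℝ) > (1 + Real.sqrt 5) / 2 * B.card) :
    AliceWins A B := by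
  obtain ⟨t, -, ht⟩ := PeerPressure.exists_invariant_of_card_lt h
  exact PeerPressure.aliceWins_of_invariant hdisj ht
end

section
/- In the formal model of Peer Pressure, if every card in Alice's hand A is higher than every card in Bob's hand B, and |B| < φ·|A| (φ the golden ratio), then Alice has a winning strategy. -/
open Finset Real
open scoped goldenRatio

theorem card_battle_lt {A B : Finset ℤ} {a b : ℤ} (ha : a ∈ A) (hb : b ∈ B) :
    #(if b < a then insert b (A.erase a) else A.erase a) +
      #(if b < a then B.erase b else insert a (B.erase b)) < #A + #B := by
  have hA := card_erase_add_one ha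
  have hB := card_erase_add_one hb
  split_ifs
  · have := card_insert_le b (A.erase a); omega
  · have := card_insert_le a (B.erase b); omega

theorem AliceWins.of_invariant (P : Finset ℤ → Finset ℤ → Prop)
    (nonempty : ∀ A, P A ∅ → A.Nonempty)
    (step : ∀ A B, P A B → B.Nonempty → ∃ a ∈ A, ∀ b ∈ B,
      P (if b < a then insert b (A.erase a) else A.erase a)
        (if b < a then B.erase b else insert a (B.erase b)))
    {A B : Finset ℤ} (h : P A B) : AliceWins A B := by
  induction hn : #A + #B using Nat.strong_induction_on generalizing A B with
  | _ n ih =>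
    obtain rfl | hB := B.eq_empty_or_nonempty
    · exact .base (nonempty A h)
    obtain ⟨a, ha, hab⟩ := step A B h hB
    exact .step hB a ha fun b hb => ih _ (hn ▸ card_battle_lt ha hb) (hab b hb) rfl

theorem disjoint_capture {A B : Finset ℤ} (h : Disjoint A B) (a b : ℤ) :
    Disjoint (insert b (A.erase a)) (B.erase b) := by
  simp only [disjoint_left, mem_insert, mem_erase] at h ⊢
  grind

theorem disjoint_lose {A B : Finset ℤ} (h : Disjoint A B) (a b : ℤ) :
    Disjoint (A.erase a) (insert a (B.erase b)) := by
  simp only [disjoint_left, mem_insert, mem_erase] at h ⊢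
  grind

def IsGoldenThreshold (A B : Finset ℤ) (t : ℤ) : Prop :=
  φ * (#B + #{y ∈ A | y ≤ t}) < #A + #{y ∈ A ∪ B | y ≤ t}

namespace IsGoldenThreshold

variable {A B A' B' : Finset ℤ} {t t' : ℤ}

theorem of_le (h : IsGoldenThreshold A B t)
    (hleft : #B' + #{y ∈ A' | y ≤ t'} ≤ #B + #{y ∈ A | y ≤ t})
    (hright : #A + #{y ∈ A ∪ B | y ≤ t} ≤ #A' + #{y ∈ A' ∪ B' | y ≤ t'}) :
    IsGoldenThreshold A' B' t' := by
  have hleft' : (#B' + #{y ∈ A' | y ≤ t'} : ℝ) ≤ #B + #{y ∈ A | y ≤ t} := by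
    exact_mod_cast hleft
  have hright' : (#A + #{y ∈ A ∪ B | y ≤ t} : ℝ) ≤ #A' + #{y ∈ A' ∪ B' | y ≤ t'} := by
    exact_mod_cast hright
  unfold IsGoldenThreshold at h ⊢
  calc φ * (#B' + #{y ∈ A' | y ≤ t'}) ≤ φ * (#B + #{y ∈ A | y ≤ t}) :=
        mul_le_mul_of_nonneg_left hleft' goldenRatio_pos.le
    _ < _ := h
    _ ≤ _ := hright'

theorem nonempty (h : IsGoldenThreshold A B t) : A.Nonempty := by
  rw [nonempty_iff_ne_empty]
  rintro rfl
  have hB : #{y ∈ ∅ ∪ B | y ≤ t} ≤ #B := by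
    rw [empty_union]; exact card_filter_le _ _
  have hB' : (#{y ∈ ∅ ∪ B | y ≤ t} : ℝ) ≤ #B := by exact_mod_cast hB
  unfold IsGoldenThreshold at h
  simp only [card_empty, filter_empty, Nat.cast_zero, add_zero, zero_add] at h
  nlinarith [one_lt_goldenRatio]

theorem of_forall_lt (hs : ∀ y ∈ A, t < y) (h : φ * #B < #A + #{y ∈ B | y ≤ t}) :
    IsGoldenThreshold A B t := by
  have hA : {y ∈ A | y ≤ t} = ∅ := filter_false_of_mem fun y hy => not_le.mpr (hs y hy)
  have hB : #{y ∈ B | y ≤ t} ≤ #{y ∈ A ∪ B | y ≤ t} :=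
    card_le_card (filter_subset_filter _ subset_union_right)
  have hB' : (#{y ∈ B | y ≤ t} : ℝ) ≤ #{y ∈ A ∪ B | y ≤ t} := by exact_mod_cast hB
  unfold IsGoldenThreshold
  rw [hA, card_empty, Nat.cast_zero, add_zero]
  linarith

theorem exists_lt_mem (h : IsGoldenThreshold A B t) :
    ∃ s, IsGoldenThreshold A B s ∧ ∃ x ∈ A, s < x := by
  by_cases hx : ∃ x ∈ A, t < x
  · exact ⟨t, h, hx⟩
  push Not at hx
  have hA := h.nonempty
  have hk : {y ∈ A | y ≤ t} = A := filter_true_of_mem hx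
  have hm : (#{y ∈ A ∪ B | y ≤ t} : ℝ) ≤ #A + #B := by
    exact_mod_cast (card_filter_le _ _).trans (card_union_le A B)
  have hgold : φ * #B < #A := by
    unfold IsGoldenThreshold at h
    rw [hk] at h
    nlinarith [goldenRatio_sq, one_lt_goldenRatio]
  refine ⟨A.min' hA - 1, of_forall_lt (fun y hy => ?_) ?_, A.min' hA, A.min'_mem hA, by omega⟩
  · linarith [A.min'_le y hy]
  · have : (0 : ℝ) ≤ #{y ∈ B | y ≤ A.min' hA - 1} := by positivity
    linarith

theorem capture (h : IsGoldenThreshold A B t) (hdisj : Disjoint A B) {x c : ℤ} (hx : x ∈ A)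
    (htx : t < x) (hc : c ∈ B) : IsGoldenThreshold (insert c (A.erase x)) (B.erase c) t := by
  refine h.of_le ?_ ?_
  · have hk : {y ∈ insert c (A.erase x) | y ≤ t} ⊆ insert c {y ∈ A | y ≤ t} := by
      intro y; simp only [mem_filter, mem_insert, mem_erase]; grind
    have := (card_le_card hk).trans (card_insert_le _ _)
    have := card_erase_add_one hc
    omega
  · have hA : #(insert c (A.erase x)) = #A := by
      rw [card_insert_of_notMem fun hc' => disjoint_right.mp hdisj hc (mem_of_mem_erase hc'),
        card_erase_add_one hx]
    have hm : {y ∈ A ∪ B | y ≤ t} ⊆ {y ∈ insert c (A.erase x) ∪ B.erase c | y ≤ t} := by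
      intro y; simp only [mem_filter, mem_insert, mem_erase, mem_union]; grind
    have := card_le_card hm
    omega

theorem lose (h : IsGoldenThreshold A B t) {x c : ℤ} (hx : x ∈ A) (htx : t < x)
    (hmin : ∀ y ∈ A, t < y → x ≤ y) (hc : c ∈ B) (hxc : x ≤ c) :
    IsGoldenThreshold (A.erase x) (insert x (B.erase c)) x := by
  refine h.of_le ?_ ?_
  · have hk : {y ∈ A.erase x | y ≤ x} ⊆ {y ∈ A | y ≤ t} := by
      intro y; simp only [mem_filter, mem_erase]; grind
    have := card_le_card hk
    have := card_insert_le x (B.erase c)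
    have := card_erase_add_one hc
    omega
  · have hm : insert x {y ∈ A ∪ B | y ≤ t} ⊆ {y ∈ A.erase x ∪ insert x (B.erase c) | y ≤ x} := by
      intro y; simp only [mem_filter, mem_insert, mem_erase, mem_union]; grind
    have := card_le_card hm
    rw [card_insert_of_notMem fun hx' => (mem_filter.mp hx').2.not_gt htx] at this
    have := card_erase_add_one hx
    omega

theorem aliceWins (hdisj : Disjoint A B) (h : IsGoldenThreshold A B t) : AliceWins A B := by
  refine AliceWins.of_invariant (fun A B => Disjoint A B ∧ ∃ t, IsGoldenThreshold A B t)
    (fun A ⟨_, _, h⟩ => h.nonempty) ?_ ⟨hdisj, t, h⟩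
  rintro A B ⟨hdisj, t, h⟩ -
  obtain ⟨s, hs, hP⟩ := h.exists_lt_mem
  obtain ⟨x, hxP, hmin⟩ := exists_min_image {y ∈ A | s < y} id (by simpa [Finset.Nonempty])
  obtain ⟨hx, hsx⟩ := mem_filter.mp hxP
  refine ⟨x, hx, fun c hc => ?_⟩
  split_ifs with hcx
  · exact ⟨disjoint_capture hdisj x c, s, hs.capture hdisj hx hsx hc⟩
  · exact ⟨disjoint_lose hdisj x c, x,
      hs.lose hx hsx (fun y hy hsy => hmin y (mem_filter.mpr ⟨hy, hsy⟩)) hc (not_lt.mp hcx)⟩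

end IsGoldenThreshold

theorem main_lemma_high_cards (A B : Finset ℤ) (hdisj : Disjoint A B)
    (hhigh : ∀ a ∈ A, ∀ b ∈ B, b < a)
    (h : (B.card : ℝ) < (1 + Real.sqrt 5) / 2 * A.card) :
    AliceWins A B := by
  have hA : A.Nonempty := by
    rw [nonempty_iff_ne_empty]
    rintro rfl
    simp only [card_empty, CharP.cast_eq_zero, mul_zero] at h
    exact (Nat.cast_nonneg _).not_gt h
  refine IsGoldenThreshold.aliceWins (t := A.min' hA - 1) hdisj (.of_forall_lt (fun y hy => ?_) ?_)
  · linarith [A.min'_le y hy]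
  · have hB : {y ∈ B | y ≤ A.min' hA - 1} = B :=
      filter_true_of_mem fun y hy => by linarith [hhigh _ (A.min'_mem hA) y hy]
    rw [hB]
    change (#B : ℝ) < φ * #A at h
    nlinarith [goldenRatio_sq, one_lt_goldenRatio]
end

section
/- In the formal model of Peer Pressure (Monotonicity Lemma): if Alice has a winning strategy from position (A, B), and A' is at least as good as A while B' is at most as good as B (with A', B' disjoint and |A'| ≥ |A|, |B'| ≤ |B|), then Alice has a winning strategy from (A', B'). -/
/-- `AsGood C C'` : the hand `C` is at least as good as the hand `C'`, i.e. for
every `k`, either the `k`-th highest card of `C` is at least the `k`-th highest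
card of `C'`, or `C'` has fewer than `k` cards. -/
def AsGood (C C' : Finset ℤ) : Prop :=
  ∀ k : ℕ, k < C'.card →
    ((C'.sort (· ≤ ·)).reverse.getD k 0) ≤ ((C.sort (· ≤ ·)).reverse.getD k 0)

/-!
Say that the deal `(A', B')` is at least as good for Alice as `(A, B)` if Bob holds no more cards
and every cut `t` of the old deal is matched by a cut `t'` of the new one with at least as many of
Alice's cards and at most as many of Bob's cards above it. This relation survives a trick in which
Alice plays cards `a`, `a'` of equal rank in the two deals, and Bob answers his card `b'` of the
new deal in the old deal by the card of the same rank as `b'` if `b'` beats `a'`, and by his lowest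
card otherwise. So Alice's winning strategy carries over by induction, and the hypotheses of the
lemma give the relation with every cut matched to itself.
-/

open Finset

section numAbove

variable {α : Type*} [LinearOrder α] {X : Finset α} {a s t : α}

def numAbove (X : Finset α) (t : α) : ℕ := #{x ∈ X | t < x}

lemma numAbove_le_card (X : Finset α) (t : α) : numAbove X t ≤ #X :=
  card_filter_le _ _

lemma numAbove_lt_card (ha : a ∈ X) : numAbove X a < #X :=
  card_lt_card <| filter_ssubset.2 ⟨a, ha, lt_irrefl a⟩

lemma numAbove_eq_card (h : ∀ x ∈ X, t < x) : numAbove X t = #X :=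
  congrArg card (filter_true_of_mem h)

lemma numAbove_anti (X : Finset α) (h : s ≤ t) : numAbove X t ≤ numAbove X s :=
  card_le_card <| monotone_filter_right _ fun _ _ hx => h.trans_lt hx

lemma numAbove_lt_numAbove (ha : a ∈ X) (h : t < a) : numAbove X a < numAbove X t :=
  card_lt_card <| (ssubset_iff_of_subset (monotone_filter_right _ fun _ _ hx => h.trans hx)).2
    ⟨a, by simp [ha, h]⟩

lemma numAbove_le_numAbove_iff (ha : a ∈ X) : numAbove X t ≤ numAbove X a ↔ a ≤ t :=
  ⟨fun h => not_lt.1 fun hlt => (numAbove_lt_numAbove ha hlt).not_ge h, numAbove_anti X⟩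

lemma numAbove_erase (ha : a ∈ X) (t : α) :
    numAbove (X.erase a) t + (if t < a then 1 else 0) = numAbove X t := by
  unfold numAbove
  rw [filter_erase]
  split_ifs with h
  · exact card_erase_add_one (mem_filter.2 ⟨ha, h⟩)
  · rw [erase_eq_of_notMem (by simp [h]), add_zero]

lemma numAbove_insert (ha : a ∉ X) (t : α) :
    numAbove (insert a X) t = numAbove X t + (if t < a then 1 else 0) := by
  unfold numAbove
  rw [filter_insert]
  split_ifs with h
  · exact card_insert_of_notMem (by simp [ha])
  · rfl

lemma mem_and_numAbove_getD_reverse_sort (X : Finset α) (d : α) {k : ℕ} (hk : k < #X) :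
    (X.sort (· ≤ ·)).reverse.getD k d ∈ X ∧
      numAbove X ((X.sort (· ≤ ·)).reverse.getD k d) = k := by
  induction X using Finset.induction_on_min generalizing k with
  | empty => simp at hk
  | insert m S hmS ih =>
    have hm : m ∉ S := fun h => lt_irrefl m (hmS m h)
    rw [card_insert_of_notMem hm] at hk
    rw [sort_insert _ (fun x hx => (hmS x hx).le) hm, List.reverse_cons]
    rcases (Nat.lt_succ_iff.1 hk).lt_or_eq with hk | rfl
    · rw [List.getD_append _ _ _ _ (by simpa using hk)]
      obtain ⟨hmem, hrank⟩ := ih hk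
      refine ⟨mem_insert_of_mem hmem, ?_⟩
      rw [numAbove_insert hm, if_neg (not_lt.2 (hmS _ hmem).le), hrank, add_zero]
    · rw [List.getD_append_right _ _ _ _ (by simp)]
      simp only [List.length_reverse, length_sort, Nat.sub_self, List.getD_cons_zero]
      refine ⟨mem_insert_self m S, ?_⟩
      rw [numAbove_insert hm, if_neg (lt_irrefl m), add_zero, numAbove_eq_card hmS]

lemma exists_numAbove_eq {k : ℕ} (hk : k < #X) : ∃ x ∈ X, numAbove X x = k := by
  obtain ⟨d, -⟩ := card_pos.1 (k.zero_le.trans_lt hk)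
  exact ⟨_, mem_and_numAbove_getD_reverse_sort X d hk⟩

end numAbove

lemma AsGood.numAbove_le {C C' : Finset ℤ} (h : AsGood C C') (hcard : #C' ≤ #C) (t : ℤ) :
    numAbove C' t ≤ numAbove C t := by
  obtain hzero | hpos := (numAbove C' t).eq_zero_or_pos
  · omega
  set k := numAbove C' t - 1
  have hk : k < #C' := by have := numAbove_le_card C' t; omega
  obtain ⟨hmem', hrank'⟩ := mem_and_numAbove_getD_reverse_sort C' 0 hk
  obtain ⟨hmem, hrank⟩ := mem_and_numAbove_getD_reverse_sort C 0 (hk.trans_le hcard)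
  have := h k hk
  have := numAbove_le_numAbove_iff hmem' (t := t)
  have := numAbove_le_numAbove_iff hmem (t := t)
  omega

def aliceHandAfter (A : Finset ℤ) (a b : ℤ) : Finset ℤ :=
  if b < a then insert b (A.erase a) else A.erase a

def bobHandAfter (B : Finset ℤ) (a b : ℤ) : Finset ℤ :=
  if b < a then B.erase b else insert a (B.erase b)

section handAfter

variable {A B : Finset ℤ} {a b : ℤ}

lemma numAbove_aliceHandAfter (ha : a ∈ A) (hb : b ∉ A) (t : ℤ) :
    numAbove (aliceHandAfter A a b) t + (if t < a then 1 else 0) =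
      numAbove A t + (if b < a ∧ t < b then 1 else 0) := by
  have herase := numAbove_erase ha t
  have hinsert := numAbove_insert (X := A.erase a) (fun h => hb (mem_of_mem_erase h)) t
  unfold aliceHandAfter
  grind

lemma numAbove_bobHandAfter (hb : b ∈ B) (ha : a ∉ B) (t : ℤ) :
    numAbove (bobHandAfter B a b) t + (if t < b then 1 else 0) =
      numAbove B t + (if ¬ b < a ∧ t < a then 1 else 0) := by
  have herase := numAbove_erase hb t
  have hinsert := numAbove_insert (X := B.erase b) (fun h => ha (mem_of_mem_erase h)) t
  unfold bobHandAfter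
  grind

lemma card_bobHandAfter (hb : b ∈ B) (ha : a ∉ B) :
    #(bobHandAfter B a b) + (if b < a then 1 else 0) = #B := by
  have herase := card_erase_add_one hb
  have hinsert := card_insert_of_notMem (s := B.erase b) (fun h => ha (mem_of_mem_erase h))
  unfold bobHandAfter
  grind

lemma disjoint_handAfter (h : Disjoint A B) :
    Disjoint (aliceHandAfter A a b) (bobHandAfter B a b) := by
  have h' := h.mono (erase_subset a A) (erase_subset b B)
  unfold aliceHandAfter bobHandAfter
  split_ifs
  · exact disjoint_insert_left.2 ⟨notMem_erase b B, h'⟩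
  · exact disjoint_insert_right.2 ⟨notMem_erase a A, h'⟩

end handAfter

def PositionLE (A B A' B' : Finset ℤ) : Prop :=
  #B' ≤ #B ∧ ∀ t, ∃ t', numAbove A t ≤ numAbove A' t' ∧ numAbove B' t' ≤ numAbove B t

namespace PositionLE

variable {A B A' B' : Finset ℤ} {a a' b b' : ℤ}

lemma numAbove_lt_card (hle : PositionLE A B A' B') (ha : a ∈ A) : numAbove A a < #A' := by
  obtain ⟨t', hα, -⟩ := hle.2 (a - 1)
  have := numAbove_lt_numAbove ha (sub_one_lt a)
  have := numAbove_le_card A' t'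
  omega

lemma handAfter_of_lt (hle : PositionLE A B A' B') (hdisj : Disjoint A B)
    (hdisj' : Disjoint A' B') (ha : a ∈ A) (ha' : a' ∈ A')
    (hrank : numAbove A' a' = numAbove A a) (hb : b ∈ B) (hbmin : ∀ y ∈ B, b ≤ y)
    (hb' : b' ∈ B') (hlt : b' < a') :
    PositionLE (aliceHandAfter A a b) (bobHandAfter B a b)
      (aliceHandAfter A' a' b') (bobHandAfter B' a' b') := by
  have haB := disjoint_left.1 hdisj ha
  have hbA := disjoint_right.1 hdisj hb
  have ha'B' := disjoint_left.1 hdisj' ha'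
  have hb'A' := disjoint_right.1 hdisj' hb'
  have hcard := card_bobHandAfter hb haB
  have hcard' := card_bobHandAfter hb' ha'B' (a := a')
  have := hle.1
  refine ⟨by grind, fun t => ?_⟩
  obtain ⟨t'', hα, hβ⟩ := hle.2 t
  have hAt := numAbove_aliceHandAfter ha hbA (b := b) t
  have hBt := numAbove_bobHandAfter hb haB (a := a) t
  have hat := numAbove_le_numAbove_iff ha (t := t)
  have hBcard : t < b → numAbove B t = #B := fun h =>
    numAbove_eq_card fun y hy => h.trans_le (hbmin y hy)
  -- A cut below all of Bob's old cards is rematched just below `b'`, which Bob no longer holds.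
  by_cases hcase : t < b ∧ b' ≤ t''
  · refine ⟨b' - 1, ?_⟩
    have hA't := numAbove_aliceHandAfter ha' hb'A' (b := b') (b' - 1)
    have hB't := numAbove_bobHandAfter hb' ha'B' (a := a') (b' - 1)
    have ha't := numAbove_le_numAbove_iff ha' (t := b' - 1)
    have := numAbove_anti A' (show b' - 1 ≤ t'' by omega)
    have := numAbove_le_card B' (b' - 1)
    grind
  · refine ⟨t'', ?_⟩
    have hA't := numAbove_aliceHandAfter ha' hb'A' (b := b') t''
    have hB't := numAbove_bobHandAfter hb' ha'B' (a := a') t''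
    have ha't := numAbove_le_numAbove_iff ha' (t := t'')
    have := numAbove_le_card B' t''
    grind

lemma handAfter_of_gt (hle : PositionLE A B A' B') (hdisj : Disjoint A B)
    (hdisj' : Disjoint A' B') (ha : a ∈ A) (ha' : a' ∈ A')
    (hrank : numAbove A' a' = numAbove A a) (hb : b ∈ B) (hb' : b' ∈ B')
    (hrankb : numAbove B b = numAbove B' b') (hgt : a' < b') :
    PositionLE (aliceHandAfter A a b) (bobHandAfter B a b)
      (aliceHandAfter A' a' b') (bobHandAfter B' a' b') := by
  have haB := disjoint_left.1 hdisj ha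
  have hbA := disjoint_right.1 hdisj hb
  have ha'B' := disjoint_left.1 hdisj' ha'
  have hb'A' := disjoint_right.1 hdisj' hb'
  have hba : ¬ b < a := by
    intro hba
    obtain ⟨t'', hα, hβ⟩ := hle.2 b
    have := numAbove_le_numAbove_iff ha (t := b)
    have := numAbove_le_numAbove_iff ha' (t := t'')
    have := numAbove_le_numAbove_iff hb' (t := t'')
    omega
  have hcard := card_bobHandAfter hb haB
  have hcard' := card_bobHandAfter hb' ha'B' (a := a')
  have := hle.1
  refine ⟨by grind, fun t => ?_⟩
  obtain ⟨t'', hα, hβ⟩ := hle.2 t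
  have hAt := numAbove_aliceHandAfter ha hbA (b := b) t
  have hBt := numAbove_bobHandAfter hb haB (a := a) t
  have hat := numAbove_le_numAbove_iff ha (t := t)
  have hbt := numAbove_le_numAbove_iff hb (t := t)
  -- A cut above `a` matched below `a'` is rematched to `a'`, which Alice no longer holds.
  by_cases hcase : a ≤ t ∧ t'' < a'
  · refine ⟨a', ?_⟩
    have hA't := numAbove_aliceHandAfter ha' hb'A' (b := b') a'
    have hB't := numAbove_bobHandAfter hb' ha'B' (a := a') a'
    have := numAbove_anti B' hcase.2.le
    grind
  · refine ⟨t'', ?_⟩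
    have hA't := numAbove_aliceHandAfter ha' hb'A' (b := b') t''
    have hB't := numAbove_bobHandAfter hb' ha'B' (a := a') t''
    have ha't := numAbove_le_numAbove_iff ha' (t := t'')
    have hb't := numAbove_le_numAbove_iff hb' (t := t'')
    grind

end PositionLE

theorem AliceWins.of_positionLE {A B A' B' : Finset ℤ} (hwin : AliceWins A B)
    (hdisj : Disjoint A B) (hdisj' : Disjoint A' B') (hle : PositionLE A B A' B') :
    AliceWins A' B' := by
  induction hwin generalizing A' B' with
  | base hA =>
    obtain ⟨a, ha⟩ := hA
    obtain rfl : B' = ∅ := card_eq_zero.1 (by simpa using hle.1)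
    exact .base (card_pos.1 (Nat.zero_lt_of_lt (hle.numAbove_lt_card ha)))
  | @step A B hB a ha _ ih =>
    rcases B'.eq_empty_or_nonempty with rfl | hB'
    · exact .base (card_pos.1 (Nat.zero_lt_of_lt (hle.numAbove_lt_card ha)))
    obtain ⟨a', ha', hrank⟩ := exists_numAbove_eq (hle.numAbove_lt_card ha)
    refine .step hB' a' ha' fun b' hb' => ?_
    have hne : a' ≠ b' := fun h => disjoint_left.1 hdisj' ha' (h ▸ hb')
    rcases hne.lt_or_gt with hgt | hlt
    · obtain ⟨b, hb, hrankb⟩ := exists_numAbove_eq ((numAbove_lt_card hb').trans_le hle.1)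
      exact ih b hb (disjoint_handAfter hdisj) (disjoint_handAfter hdisj')
        (hle.handAfter_of_gt hdisj hdisj' ha ha' hrank hb hb' hrankb hgt)
    · exact ih _ (B.min'_mem hB) (disjoint_handAfter hdisj) (disjoint_handAfter hdisj')
        (hle.handAfter_of_lt hdisj hdisj' ha ha' hrank (B.min'_mem hB)
          (fun y hy => B.min'_le y hy) hb' hlt)

theorem monotonicity_lemma (A B A' B' : Finset ℤ)
    (hdisj : Disjoint A B) (hdisj' : Disjoint A' B')
    (hwin : AliceWins A B)
    (hA : AsGood A' A) (hB : AsGood B B')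
    (hcardA : A.card ≤ A'.card) (hcardB : B'.card ≤ B.card) :
    AliceWins A' B' :=
  hwin.of_positionLE hdisj hdisj'
    ⟨hcardB, fun t => ⟨t, hA.numAbove_le hcardA t, hB.numAbove_le hcardB t⟩⟩
end

section
/- In the formal model of Peer Pressure, if both players' hands are nonempty, have equal size, the total number of cards is at most 4, and Alice holds the highest card, then Alice has a winning strategy. -/
namespace AliceWins

theorem step_of_forall_lt {A B : Finset ℤ} (hB : B.Nonempty) {a : ℤ} (ha : a ∈ A)
    (hlt : ∀ b ∈ B, b < a) (h : ∀ b ∈ B, AliceWins (insert b (A.erase a)) (B.erase b)) :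
    AliceWins A B :=
  step hB a ha fun b hb => by simpa only [if_pos (hlt b hb)] using h b hb

theorem step_of_forall_gt {A B : Finset ℤ} (hB : B.Nonempty) {a : ℤ} (ha : a ∈ A)
    (hgt : ∀ b ∈ B, a < b) (h : ∀ b ∈ B, AliceWins (A.erase a) (insert a (B.erase b))) :
    AliceWins A B :=
  step hB a ha fun b hb => by simpa only [if_neg (hgt b hb).asymm] using h b hb

theorem singleton_of_lt {A : Finset ℤ} {a c : ℤ} (ha : a ∈ A) (hca : c < a) :
    AliceWins A {c} :=
  step_of_forall_lt (Finset.singleton_nonempty c) ha (by simpa using hca) fun b hb => by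
    rw [Finset.mem_singleton] at hb
    rw [hb, Finset.erase_singleton]
    exact base (Finset.insert_nonempty _ _)

theorem singleton_of_one_lt_card {A : Finset ℤ} {c : ℤ} (hA : 1 < A.card) (hc : c ∉ A) :
    AliceWins A {c} := by
  by_cases hbeat : ∃ a ∈ A, c < a
  · obtain ⟨a, ha, hca⟩ := hbeat
    exact singleton_of_lt ha hca
  push Not at hbeat
  have hne : A.Nonempty := Finset.card_pos.mp (by omega)
  set x := A.min' hne
  have hxc : x < c := lt_of_le_of_ne (hbeat x (A.min'_mem hne)) fun h => hc (h ▸ A.min'_mem hne)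
  refine step_of_forall_gt (Finset.singleton_nonempty c) (A.min'_mem hne) (by simpa using hxc)
    fun b hb => ?_
  rw [Finset.mem_singleton] at hb
  rw [hb, Finset.erase_singleton, insert_empty_eq]
  obtain ⟨y, hy, hyx⟩ := Finset.exists_mem_ne hA x
  exact singleton_of_lt (Finset.mem_erase.mpr ⟨hyx, hy⟩)
    (lt_of_le_of_ne (A.min'_le y hy) (Ne.symm hyx))

end AliceWins

theorem equal_size_high_card_wins_general (A B : Finset ℤ) (hdisj : Disjoint A B)
    (hB : B.Nonempty) (hcard : A.card = B.card)
    (htotal : A.card + B.card ≤ 4)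
    (hhigh : ∃ a ∈ A, ∀ b ∈ B, b < a) :
    AliceWins A B := by
  obtain ⟨a, ha, hlt⟩ := hhigh
  have hBpos : 1 ≤ B.card := hB.card_pos
  rcases (by omega : B.card = 1 ∨ B.card = 2) with hB1 | hB2
  · obtain ⟨c, rfl⟩ := Finset.card_eq_one.mp hB1
    exact AliceWins.singleton_of_lt ha (hlt c (Finset.mem_singleton_self c))
  refine AliceWins.step_of_forall_lt hB ha hlt fun b hb => ?_
  obtain ⟨c, hc⟩ := Finset.card_eq_one.mp (by rw [Finset.card_erase_of_mem hb, hB2] :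
    (B.erase b).card = 1)
  have hcB : c ∈ B.erase b := hc ▸ Finset.mem_singleton_self c
  have hbA : b ∉ A.erase a := fun h => Finset.disjoint_left.mp hdisj (Finset.mem_of_mem_erase h) hb
  rw [hc]
  refine AliceWins.singleton_of_one_lt_card ?_ ?_
  · rw [Finset.card_insert_of_notMem hbA, Finset.card_erase_of_mem ha]
    omega
  · rw [Finset.mem_insert, not_or]
    exact ⟨Finset.ne_of_mem_erase hcB, fun h => Finset.disjoint_left.mp hdisj
      (Finset.mem_of_mem_erase h) (Finset.mem_of_mem_erase hcB)⟩

theorem equal_size_high_card_wins (A B : Finset ℤ) (hdisj : Disjoint A B)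
    (hA : A.Nonempty) (hB : B.Nonempty) (hcard : A.card = B.card)
    (htotal : A.card + B.card ≤ 4)
    (hhigh : ∃ a ∈ A, ∀ b ∈ B, b < a) :
    AliceWins A B :=
  equal_size_high_card_wins_general A B hdisj hB hcard htotal hhigh
end
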